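/- arXiv:1212.5137 — 2 statements merged into one kernel-verified Lean document; each statement's English description precedes it below -/
import Mathlib

section
/- Let V be an open subset of ℝ³ = ℂ×ℝ and let v : V → ℝ be of class C². Then for every z = (z₁,z₂) ∈ π^{−1}(V) ⊂ ℝ⁴, Δ(v ∘ π)(z) = 4(|z₁|² + |z₂|²)·(Δv)(π(z)), where the Laplacian on the left is the Euclidean Laplacian on ℝ⁴ and on the right the Euclidean Laplacian on ℝ³. Equivalently, Δ(v ∘ π)(z) = 4|π(z)|·(Δv)(π(z)), since |π(z)| = |z₁|² + |z₂|². -/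
/-- The Laplacian (trace of the second derivative) of a real-valued function on a
finite-dimensional Euclidean space, computed in the standard orthonormal coordinates. -/
noncomputable def lap {ι : Type*} [Fintype ι] [DecidableEq ι]
    (u : EuclideanSpace ℝ ι → ℝ) (x : EuclideanSpace ℝ ι) : ℝ :=
  ∑ i, iteratedFDeriv ℝ 2 u x ![EuclideanSpace.single i 1, EuclideanSpace.single i 1]

/-- The Hopf map π : ℝ⁴ = ℂ×ℂ → ℝ³ = ℂ×ℝ, π(z₁,z₂) = (2·conj(z₁)·z₂, |z₁|² − |z₂|²),
in real coordinates (z₁ = x₀ + i x₁, z₂ = x₂ + i x₃). -/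
noncomputable def hopfC (x : EuclideanSpace ℝ (Fin 4)) : EuclideanSpace ℝ (Fin 3) :=
  WithLp.toLp 2 (![(2 * (starRingEnd ℂ) (⟨x 0, x 1⟩ : ℂ) * (⟨x 2, x 3⟩ : ℂ)).re,
    (2 * (starRingEnd ℂ) (⟨x 0, x 1⟩ : ℂ) * (⟨x 2, x 3⟩ : ℂ)).im,
    ‖(⟨x 0, x 1⟩ : ℂ)‖ ^ 2 - ‖(⟨x 2, x 3⟩ : ℂ)‖ ^ 2])

/-!
The Hopf map is the quadratic map `x ↦ Q x x` of a symmetric bilinear map `Q : ℝ⁴ × ℝ⁴ → ℝ³`.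
Each component of `Q` is a traceless quadratic form, so `π` is harmonic, and the vectors
`Dπ(z) eᵢ = 2 Q z eᵢ` form a tight frame of `ℝ³` with bound `4|z|²`, i.e. `Dπ(z) Dπ(z)ᵀ = 4|z|² I`.
By the chain rule `Δ(v ∘ π) = tr (Dπᵀ D²v Dπ) + Dv (Δπ)`, the first term is `4|z|² Δv` and the
second vanishes. Finally `|π(z)| = |z|²` is the identity
`(|z₁|² + |z₂|²)² = |2 z̄₁ z₂|² + (|z₁|² - |z₂|²)²`.
-/

open EuclideanSpace

section SecondDerivative

variable {𝕜 : Type*} [NontriviallyNormedField 𝕜]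
  {E F G : Type*} [NormedAddCommGroup E] [NormedSpace 𝕜 E] [NormedAddCommGroup F]
  [NormedSpace 𝕜 F] [NormedAddCommGroup G] [NormedSpace 𝕜 G]

theorem fderiv_fderiv_comp_apply {g : E → F} {v : F → G} {z : E}
    (hg : ContDiffAt 𝕜 2 g z) (hv : ContDiffAt 𝕜 2 v (g z)) (a b : E) :
    fderiv 𝕜 (fderiv 𝕜 (v ∘ g)) z a b =
      fderiv 𝕜 (fderiv 𝕜 v) (g z) (fderiv 𝕜 g z a) (fderiv 𝕜 g z b) +
        fderiv 𝕜 v (g z) (fderiv 𝕜 (fderiv 𝕜 g) z a b) := by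
  have hD : fderiv 𝕜 (v ∘ g) =ᶠ[nhds z] fun x => (fderiv 𝕜 v (g x)).comp (fderiv 𝕜 g x) := by
    filter_upwards [hg.eventually (by simp), hg.continuousAt.eventually (hv.eventually (by simp))]
      with x hgx hvx
    exact fderiv_comp x (hvx.differentiableAt two_ne_zero) (hgx.differentiableAt two_ne_zero)
  have hDv : HasFDerivAt (fun x => fderiv 𝕜 v (g x))
      ((fderiv 𝕜 (fderiv 𝕜 v) (g z)).comp (fderiv 𝕜 g z)) z :=
    ((hv.fderiv_right (m := 1) le_rfl).differentiableAt one_ne_zero).hasFDerivAt.comp z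
      (hg.differentiableAt two_ne_zero).hasFDerivAt
  have hDg : HasFDerivAt (fderiv 𝕜 g) (fderiv 𝕜 (fderiv 𝕜 g) z) z :=
    ((hg.fderiv_right (m := 1) le_rfl).differentiableAt one_ne_zero).hasFDerivAt
  rw [((hDv.clm_comp hDg).congr_of_eventuallyEq hD).fderiv]
  simp only [add_apply, ContinuousLinearMap.comp_apply, ContinuousLinearMap.compL_apply,
    ContinuousLinearMap.flip_apply]
  exact add_comm _ _

variable (Q : E →L[𝕜] E →L[𝕜] F)

theorem hasFDerivAt_apply_self (hQ : ∀ a b, Q a b = Q b a) (z : E) :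
    HasFDerivAt (fun x => Q x x) ((2 : 𝕜) • Q z) z := by
  refine (Q.hasFDerivAt_of_bilinear (hasFDerivAt_id z) (hasFDerivAt_id z)).congr_fderiv ?_
  ext a
  simp [two_smul, hQ a z]

theorem fderiv_fderiv_apply_self (hQ : ∀ a b, Q a b = Q b a) (z : E) :
    fderiv 𝕜 (fderiv 𝕜 fun x => Q x x) z = (2 : 𝕜) • Q := by
  have : fderiv 𝕜 (fun x => Q x x) = ⇑((2 : 𝕜) • Q) :=
    funext fun x => (hasFDerivAt_apply_self Q hQ x).fderiv
  rw [this, ContinuousLinearMap.fderiv]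

theorem contDiff_apply_self {n : WithTop ℕ∞} : ContDiff 𝕜 n fun x => Q x x :=
  Q.isBoundedBilinearMap.contDiff.comp (contDiff_id.prodMk contDiff_id)

end SecondDerivative

section TightFrame

variable {ι κ : Type*} [Fintype ι] [DecidableEq κ]

/-- The coordinate form of `∑ i, w i (w i)ᵀ = c • 1`. -/
def IsTightFrame (w : ι → EuclideanSpace ℝ κ) (c : ℝ) : Prop :=
  ∀ j k, ∑ i, w i j * w i k = if j = k then c else 0

theorem IsTightFrame.smul {w : ι → EuclideanSpace ℝ κ} {c : ℝ} (hw : IsTightFrame w c) (a : ℝ) :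
    IsTightFrame (fun i => a • w i) (a ^ 2 * c) := by
  intro j k
  simp only [PiLp.smul_apply, smul_eq_mul]
  rw [← mul_ite_zero, ← hw j k, Finset.mul_sum]
  exact Finset.sum_congr rfl fun _ _ => by ring

variable [Fintype κ]

theorem IsTightFrame.sum_apply_apply {w : ι → EuclideanSpace ℝ κ} {c : ℝ}
    (hw : IsTightFrame w c) (B : EuclideanSpace ℝ κ →L[ℝ] EuclideanSpace ℝ κ →L[ℝ] ℝ) :
    ∑ i, B (w i) (w i) = c * ∑ j, B (single j 1) (single j 1) := by
  have hexp : ∀ x : EuclideanSpace ℝ κ, x = ∑ j, x j • single j 1 := fun x => by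
    simpa only [basisFun_apply, basisFun_repr] using ((basisFun κ ℝ).sum_repr x).symm
  calc ∑ i, B (w i) (w i)
      = ∑ i, ∑ j, ∑ k, w i j * w i k * B (single j 1) (single k 1) := by
        refine Finset.sum_congr rfl fun i _ => ?_
        conv_lhs => rw [hexp (w i)]
        simp only [map_sum, map_smul, sum_apply, smul_apply, smul_eq_mul, Finset.mul_sum,
          mul_assoc]
        rw [Finset.sum_comm]
        exact Finset.sum_congr rfl fun _ _ => Finset.sum_congr rfl fun _ _ => by ring
    _ = ∑ j, ∑ k, (∑ i, w i j * w i k) * B (single j 1) (single k 1) := by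
        simp only [Finset.sum_mul]
        rw [Finset.sum_comm]
        exact Finset.sum_congr rfl fun j _ => Finset.sum_comm
    _ = c * ∑ j, B (single j 1) (single j 1) := by
        simp only [hw _ _, ite_mul, zero_mul, Finset.sum_ite_eq, Finset.mem_univ, if_true,
          Finset.mul_sum]

end TightFrame

section Laplacian

variable {ι : Type*} [Fintype ι] [DecidableEq ι]

theorem lap_eq_sum_fderiv_fderiv (u : EuclideanSpace ℝ ι → ℝ) (x : EuclideanSpace ℝ ι) :
    lap u x = ∑ i, fderiv ℝ (fderiv ℝ u) x (single i 1) (single i 1) := by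
  simp only [lap, iteratedFDeriv_two_apply, Matrix.cons_val_zero, Matrix.cons_val_one]

theorem lap_comp {F : Type*} [NormedAddCommGroup F] [NormedSpace ℝ F]
    {g : EuclideanSpace ℝ ι → F} {v : F → ℝ} {z : EuclideanSpace ℝ ι}
    (hg : ContDiffAt ℝ 2 g z) (hv : ContDiffAt ℝ 2 v (g z)) :
    lap (v ∘ g) z =
      ∑ i, fderiv ℝ (fderiv ℝ v) (g z) (fderiv ℝ g z (single i 1)) (fderiv ℝ g z (single i 1)) +
        fderiv ℝ v (g z) (∑ i, fderiv ℝ (fderiv ℝ g) z (single i 1) (single i 1)) := by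
  simp only [lap_eq_sum_fderiv_fderiv, fderiv_fderiv_comp_apply hg hv, map_sum,
    Finset.sum_add_distrib]

theorem lap_comp_apply_self {κ : Type*} [Fintype κ] [DecidableEq κ]
    (Q : EuclideanSpace ℝ ι →L[ℝ] EuclideanSpace ℝ ι →L[ℝ] EuclideanSpace ℝ κ)
    (hQ : ∀ a b, Q a b = Q b a) (htrace : ∑ i, Q (single i 1) (single i 1) = 0)
    {v : EuclideanSpace ℝ κ → ℝ} {z : EuclideanSpace ℝ ι} {c : ℝ}
    (hframe : IsTightFrame (fun i => Q z (single i 1)) c) (hv : ContDiffAt ℝ 2 v (Q z z)) :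
    lap (v ∘ fun x => Q x x) z = 4 * c * lap v (Q z z) := by
  have hframe' : IsTightFrame (fun i => fderiv ℝ (fun x => Q x x) z (single i 1)) (4 * c) := by
    simpa [(hasFDerivAt_apply_self Q hQ z).fderiv, show (2 : ℝ) ^ 2 = 4 by norm_num]
      using hframe.smul 2
  rw [lap_comp (contDiff_apply_self Q).contDiffAt hv, hframe'.sum_apply_apply,
    fderiv_fderiv_apply_self Q hQ, lap_eq_sum_fderiv_fderiv]
  simp [← Finset.smul_sum, htrace]

end Laplacian

def hopfPolar (x y : EuclideanSpace ℝ (Fin 4)) : EuclideanSpace ℝ (Fin 3) :=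
  WithLp.toLp 2 ![x 0 * y 2 + x 2 * y 0 + x 1 * y 3 + x 3 * y 1,
    x 0 * y 3 + x 3 * y 0 - x 1 * y 2 - x 2 * y 1,
    x 0 * y 0 + x 1 * y 1 - x 2 * y 2 - x 3 * y 3]

theorem isBilinearMap_hopfPolar : IsBilinearMap ℝ hopfPolar := by
  constructor <;> intros <;> ext j <;> fin_cases j <;> simp [hopfPolar] <;> ring

noncomputable def hopfForm :
    EuclideanSpace ℝ (Fin 4) →L[ℝ] EuclideanSpace ℝ (Fin 4) →L[ℝ] EuclideanSpace ℝ (Fin 3) :=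
  isBilinearMap_hopfPolar.toContinuousBilinearMap

theorem hopfForm_comm (x y : EuclideanSpace ℝ (Fin 4)) : hopfForm x y = hopfForm y x := by
  ext j; fin_cases j <;> simp [hopfForm, hopfPolar] <;> ring

theorem hopfC_eq_hopfForm : hopfC = fun x => hopfForm x x := by
  ext x j
  fin_cases j <;>
    simp [hopfForm, hopfPolar, hopfC, Complex.mul_re, Complex.mul_im, Complex.sq_norm,
      Complex.normSq_mk] <;> ring

theorem sum_hopfForm_single_single :
    ∑ i, hopfForm (single i 1) (single i 1) = 0 := by
  ext j; fin_cases j <;> simp [hopfForm, hopfPolar, Fin.sum_univ_four]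

theorem isTightFrame_hopfForm (z : EuclideanSpace ℝ (Fin 4)) :
    IsTightFrame (fun i => hopfForm z (single i 1)) (‖z‖ ^ 2) := by
  intro j k
  rw [EuclideanSpace.norm_sq_eq]
  fin_cases j <;> fin_cases k <;> simp [hopfForm, hopfPolar, Fin.sum_univ_four] <;> ring

theorem norm_hopfC (z : EuclideanSpace ℝ (Fin 4)) : ‖hopfC z‖ = ‖z‖ ^ 2 := by
  rw [EuclideanSpace.norm_eq, ← Real.sqrt_sq (sq_nonneg ‖z‖), EuclideanSpace.norm_sq_eq]
  congr 1
  simp [hopfC_eq_hopfForm, hopfForm, hopfPolar, Fin.sum_univ_three, Fin.sum_univ_four]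
  ring

theorem norm_sq_add_norm_sq_eq_norm_sq (z : EuclideanSpace ℝ (Fin 4)) :
    ‖(⟨z 0, z 1⟩ : ℂ)‖ ^ 2 + ‖(⟨z 2, z 3⟩ : ℂ)‖ ^ 2 = ‖z‖ ^ 2 := by
  simp [EuclideanSpace.norm_sq_eq, Fin.sum_univ_four, Complex.sq_norm, Complex.normSq_mk]
  ring

theorem lap_comp_hopfC {v : EuclideanSpace ℝ (Fin 3) → ℝ} {z : EuclideanSpace ℝ (Fin 4)}
    (hv : ContDiffAt ℝ 2 v (hopfC z)) :
    lap (v ∘ hopfC) z = 4 * ‖z‖ ^ 2 * lap v (hopfC z) := by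
  rw [hopfC_eq_hopfForm] at hv ⊢
  exact lap_comp_apply_self hopfForm hopfForm_comm sum_hopfForm_single_single
    (isTightFrame_hopfForm z) hv


/-- Δ(v ∘ π)(z) = 4(|z₁|² + |z₂|²)·(Δv)(π(z)) = 4|π(z)|·(Δv)(π(z)). -/
theorem stmt_5 (V : Set (EuclideanSpace ℝ (Fin 3))) (hV : IsOpen V)
    (v : EuclideanSpace ℝ (Fin 3) → ℝ) (hv : ContDiffOn ℝ 2 v V)
    (z : EuclideanSpace ℝ (Fin 4)) (hz : z ∈ hopfC ⁻¹' V) :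
    lap (v ∘ hopfC) z =
      4 * (‖(⟨z 0, z 1⟩ : ℂ)‖ ^ 2 + ‖(⟨z 2, z 3⟩ : ℂ)‖ ^ 2) *
        lap v (hopfC z) ∧
    lap (v ∘ hopfC) z = 4 * ‖hopfC z‖ * lap v (hopfC z) := by
  
  have hmain := lap_comp_hopfC (hv.contDiffAt (hV.mem_nhds hz))
  exact ⟨by rw [norm_sq_add_norm_sq_eq_norm_sq, hmain], by rw [norm_hopfC, hmain]⟩
end

section
/- Let k ≥ 0 be an integer, 0 < t₀ < t₁, and define φ(t) := (1/(k+1))·(1 − (t₀/t)^{k+1}). Let d ≥ 1, t ∈ [t₀, t₁], ν₁ ∈ ℝ and z, ν₂ ∈ ℝ^d. If (t − t₀)·ν₁ + ⟨z, ν₂⟩ > 0 and (t − t₁)·ν₁ + ⟨z, ν₂⟩ > 0, then φ(t)·t·ν₁ + ⟨z, ν₂⟩ > 0. -/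
open RealInnerProductSpace

lemma aux_pow_sub (x y : ℝ) (hy : 0 ≤ y) (hxy : y ≤ x) :
    ∀ n : ℕ, x ^ (n + 1) - y ^ (n + 1) ≤ (n + 1) * x ^ n * (x - y) := by
  intro n
  induction n with
  | zero => simp
  | succ n ih =>
    have hx : 0 ≤ x := hy.trans hxy
    have h1 : y ^ (n + 1) ≤ x ^ (n + 1) := pow_le_pow_left₀ hy hxy _
    have h2 : (0:ℝ) ≤ x ^ (n + 1) := pow_nonneg hx _
    have key : x ^ (n + 1 + 1) - y ^ (n + 1 + 1)
        = x * (x ^ (n + 1) - y ^ (n + 1)) + y ^ (n + 1) * (x - y) := by ring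
    push_cast
    have e : x * (((n:ℝ) + 1) * x ^ n * (x - y)) = ((n:ℝ) + 1) * x ^ (n + 1) * (x - y) := by
      ring
    linarith [key, mul_le_mul_of_nonneg_left ih hx,
      mul_le_mul_of_nonneg_right h1 (sub_nonneg.2 hxy)]

/-- key geometric inequality for the doubly starshaped condition. -/
theorem stmt_13 (k : ℕ) (t₀ t₁ : ℝ) (ht₀ : 0 < t₀) (ht₀₁ : t₀ < t₁) (φ : ℝ → ℝ)
    (hφ : ∀ t : ℝ, φ t = (1 / ((k : ℝ) + 1)) * (1 - (t₀ / t) ^ (k + 1)))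
    (d : ℕ) (hd : 1 ≤ d) (t : ℝ) (ht : t ∈ Set.Icc t₀ t₁) (ν₁ : ℝ)
    (z ν₂ : EuclideanSpace ℝ (Fin d))
    (h0 : 0 < (t - t₀) * ν₁ + ⟪z, ν₂⟫)
    (h1 : 0 < (t - t₁) * ν₁ + ⟪z, ν₂⟫) :
    0 < φ t * t * ν₁ + ⟪z, ν₂⟫ := by
  obtain ⟨ht0, ht1⟩ := ht
  have htpos : (0:ℝ) < t := lt_of_lt_of_le ht₀ ht0
  have hk1 : (0:ℝ) < (k:ℝ) + 1 := by positivity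
  have hratio : (t₀ / t) ^ (k + 1) ≤ 1 := by
    apply pow_le_one₀ (by positivity)
    exact div_le_one_of_le₀ ht0 htpos.le
  have ha0 : 0 ≤ φ t * t := by
    rw [hφ]
    have : 0 ≤ 1 - (t₀ / t) ^ (k + 1) := by linarith
    positivity
  have ha1 : φ t * t ≤ t - t₀ := by
    rw [hφ]
    have hpow := aux_pow_sub t t₀ ht₀.le ht0 k
    rw [div_pow]
    have htk : (0:ℝ) < t ^ k := by positivity
    have hexp : 1 / ((k:ℝ) + 1) * (1 - t₀ ^ (k + 1) / t ^ (k + 1)) * t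
        = (t ^ (k+1) - t₀ ^ (k+1)) / (((k:ℝ) + 1) * t ^ k) := by
      field_simp
      ring
    rw [hexp, div_le_iff₀ (by positivity)]
    nlinarith [hpow]
  rcases le_or_gt 0 ν₁ with hν | hν
  · have : (t - t₁) * ν₁ ≤ φ t * t * ν₁ := by nlinarith
    linarith
  · have : (t - t₀) * ν₁ ≤ φ t * t * ν₁ := by nlinarith
    linarith
end
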